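/- Assume upper Ahlfors regularity (H4′). Then there is a constant c, depending only on n, t and A_Γ (and in particular independent of δ), such that for every 0 < δ ≤ δ_Γ and every H^t-measurable set Γ″ ⊆ Γ one has ∫_{Γ″} G_δ(x̄) dH^t(x̄) ≤ c · δ^t · ν(B_{2δ}(Γ″); u), where B_r(E) := { x ∈ ℝⁿ : dist(x, E) < r }. -/

import Mathlib

open MeasureTheory Metric Set Filter
open scoped ENNReal NNReal Topology

noncomputable section

abbrev Euc (n : ℕ) := EuclideanSpace ℝ (Fin n)

variable {n : ℕ}

/-- Distance to the boundary of `Ω`. -/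
def dB (Ω : Set (Euc n)) (x : Euc n) : ℝ := infDist x (frontier Ω)

/-- `Ψ(x) = B(x, d(x)/2)`. -/
def PsiB (Ω : Set (Euc n)) (x : Euc n) : Set (Euc n) := ball x (dB Ω x / 2)

/-- `Φ(x) = B(x, d(x)/6)`. -/
def PhiB (Ω : Set (Euc n)) (x : Euc n) : Set (Euc n) := ball x (dB Ω x / 6)

/-- The integrand of `ν(·;u)`. -/
def nuInt (Ω : Set (Euc n)) (s : Euc n → ℝ) (p : ℝ) (u : Euc n → ℝ) (x : Euc n) : ℝ :=
  (⨍ y in PsiB Ω x, |u y - u x|) ^ p * dB Ω x ^ (-(p * s x))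

/-- `ν(E;u)`. -/
def nuM (Ω : Set (Euc n)) (s : Euc n → ℝ) (p : ℝ) (u : Euc n → ℝ) (E : Set (Euc n)) : ℝ :=
  ∫ x in Ω ∩ E, nuInt Ω s p u x

/-- Membership in the nonlocal space `𝒩^{s,p}(Ω)`: `u ∈ L¹(Ω)` and `ν(Ω;u) < ∞`. -/
def MemN (Ω : Set (Euc n)) (s : Euc n → ℝ) (p : ℝ) (u : Euc n → ℝ) : Prop :=
  IntegrableOn u Ω volume ∧ IntegrableOn (nuInt Ω s p u) Ω volume

/-- `g(x;u)`, the mean of `u` over `Φ(x)`. -/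
def gFun (Ω : Set (Euc n)) (u : Euc n → ℝ) (x : Euc n) : ℝ := ⨍ y in PhiB Ω x, u y

/-- The approach region `Q^θ_λ(xb)`. -/
def Qreg (Ω : Set (Euc n)) (lam θ : ℝ) (xb : Euc n) : Set (Euc n) :=
  {x | x ∈ Ω ∧ (lam * dist xb x) ^ θ < dB Ω x}

/-- `Q` is an `(η,θ)`-corkscrew region for `xb` with radius `δ₀`. -/
def IsCorkscrew (Ω Q : Set (Euc n)) (xb : Euc n) (η θ δ₀ : ℝ) : Prop :=
  ∀ δ : ℝ, 0 < δ → δ ≤ δ₀ →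
    ∃ x ∈ Q, η * δ < dist xb x ∧ dist xb x < δ ∧ (η * δ) ^ θ < dB Ω x

/-- `E` is `(C,θ)`-connected to `xb`, with radius `ρ₀` and gauge `ε`. -/
def ConnectedTo (Ω E : Set (Euc n)) (xb : Euc n) (C θ ρ₀ : ℝ) (ε : ℝ → ℝ) : Prop :=
  ∀ lam : ℝ, 0 < lam → lam < 1 →
    0 < ε lam ∧ ε lam ≤ lam ∧
      ∀ ρ : ℝ, 0 < ρ → ρ ≤ ρ₀ → ∀ x ∈ E ∩ ball xb ρ, ∀ x' ∈ E ∩ ball xb ρ,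
        (lam * ρ) ^ θ ≤ dB Ω x → (lam * ρ) ^ θ ≤ dB Ω x' →
        ∃ γ : ℝ → Euc n, ContinuousOn γ (Icc 0 1) ∧ γ 0 = x ∧ γ 1 = x' ∧
          (∀ τ ∈ Icc (0:ℝ) 1, γ τ ∈ E ∧ ε lam * ρ ^ θ ≤ dB Ω (γ τ)) ∧
          eVariationOn γ (Icc 0 1) ≤ ENNReal.ofReal (C * ρ)

/-- The piecewise bilinear function `α(s,θ)`. -/
def alphaFun (n : ℕ) (p sv θ : ℝ) : ℝ :=
  if p * sv - n ≤ p - 1 then p * (1 - θ) + (p * sv - n) * θ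
  else (1 - θ) + (p * sv - n)

/-- `s̲_δ(xb)`. -/
def sLow (Ω : Set (Euc n)) (s : Euc n → ℝ) (xb : Euc n) (δ : ℝ) : ℝ :=
  sInf (s '' (Ω ∩ ball xb δ))

/-- `α̲_δ(xb)`. -/
def alphaLow (Ω : Set (Euc n)) (s : Euc n → ℝ) (p : ℝ) (θΓ : Euc n → ℝ)
    (xb : Euc n) (δ : ℝ) : ℝ :=
  alphaFun n p (sLow Ω s xb δ) (θΓ xb)

/-- `α̲_0(xb) = lim_{δ → 0⁺} α̲_δ(xb)`. -/
def alphaLow0 (Ω : Set (Euc n)) (s : Euc n → ℝ) (p : ℝ) (θΓ : Euc n → ℝ) (xb : Euc n) : ℝ :=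
  limUnder (𝓝[>] (0:ℝ)) (fun δ => alphaLow Ω s p θΓ xb δ)

/-- `Γ_τ`: points of `Γ` where `limsup_{ρ→0⁺} ρ^{-τ} ν(B(xb,ρ);u) < ∞`. -/
def GammaTau (Ω : Set (Euc n)) (s : Euc n → ℝ) (p : ℝ) (u : Euc n → ℝ)
    (Γ : Set (Euc n)) (τ : ℝ) : Set (Euc n) :=
  {xb ∈ Γ | ∃ M : ℝ, ∀ᶠ ρ in 𝓝[>] (0:ℝ), ρ ^ (-τ) * nuM Ω s p u (ball xb ρ) ≤ M}

/-- `M_τ(xb) = sup_{0<ρ≤δΓ} ρ^{-τ} ν(B(xb,ρ);u)`. -/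
def Mtau (Ω : Set (Euc n)) (s : Euc n → ℝ) (p : ℝ) (u : Euc n → ℝ)
    (δΓ τ : ℝ) (xb : Euc n) : ℝ :=
  sSup ((fun ρ => ρ ^ (-τ) * nuM Ω s p u (ball xb ρ)) '' Ioc 0 δΓ)

/-!
Write `F = (⨍_Ψ |u - u(x)|)ᵖ d^{-ps}` for the integrand of `ν`. By Tonelli,
`∫_{Γ″} ν(B(x̄,δ)) dHᵗ(x̄) = ∫ F(x) · Hᵗ(Γ″ ∩ B(x,δ)) dx`, and only points `x` within `δ` of `Γ″`
contribute. If `y ∈ Γ ∩ B(x,δ)` then `Γ ∩ B(x,δ) ⊆ Γ ∩ B(y,2δ)`, so upper Ahlfors regularity bounds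
`Hᵗ(Γ″ ∩ B(x,δ))` by `A_Γ (2δ)ᵗ`, which gives `c = 2ᵗ A_Γ`. The same bound makes `Hᵗ` restricted
to `Γ″` locally finite, hence σ-finite, as Tonelli requires.
-/

section UpperAhlfors

variable {X : Type*} [PseudoMetricSpace X] [MeasurableSpace X]

def IsUpperAhlforsRegular (μ : Measure X) (Γ : Set X) (A t : ℝ) : Prop :=
  ∀ y ∈ Γ, ∀ ρ : ℝ, 0 < ρ → μ (Γ ∩ ball y ρ) ≤ ENNReal.ofReal (A * ρ ^ t)

variable {μ : Measure X} {Γ : Set X} {A t : ℝ}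

theorem IsUpperAhlforsRegular.measure_inter_ball_le (h : IsUpperAhlforsRegular μ Γ A t)
    (x : X) {r : ℝ} (hr : 0 < r) : μ (Γ ∩ ball x r) ≤ ENNReal.ofReal (A * (2 * r) ^ t) := by
  rcases (Γ ∩ ball x r).eq_empty_or_nonempty with hempty | ⟨y, hyΓ, hyx⟩
  · simp [hempty]
  have hsub : Γ ∩ ball x r ⊆ Γ ∩ ball y (2 * r) := fun z ⟨hzΓ, hzx⟩ =>
    ⟨hzΓ, mem_ball.2 <| (dist_triangle_right z y x).trans_lt <| by
      rw [two_mul]; exact add_lt_add (mem_ball.1 hzx) (mem_ball.1 hyx)⟩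
  exact (measure_mono hsub).trans (h y hyΓ _ (by positivity))

theorem IsUpperAhlforsRegular.isLocallyFiniteMeasure_restrict [OpensMeasurableSpace X]
    (h : IsUpperAhlforsRegular μ Γ A t) : IsLocallyFiniteMeasure (μ.restrict Γ) :=
  ⟨fun x => ⟨ball x 1, ball_mem_nhds x one_pos, by
    rw [Measure.restrict_apply measurableSet_ball, inter_comm]
    exact (h.measure_inter_ball_le x one_pos).trans_lt ENNReal.ofReal_lt_top⟩⟩

end UpperAhlfors

section Tonelli

variable {X : Type*} [PseudoMetricSpace X] [SecondCountableTopology X] [MeasurableSpace X]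
  [BorelSpace X]

theorem lintegral_setLIntegral_ball_eq (μ ν : Measure X) [SFinite μ] [SFinite ν]
    {f : X → ℝ≥0∞} (hf : AEMeasurable f ν) (δ : ℝ) :
    ∫⁻ a, ∫⁻ x in ball a δ, f x ∂ν ∂μ = ∫⁻ x, μ (ball x δ) * f x ∂ν := by
  have hclose : MeasurableSet {z : X × X | dist z.2 z.1 < δ} :=
    (isOpen_lt (continuous_snd.dist continuous_fst) continuous_const).measurableSet
  have hprod : AEMeasurable (Function.uncurry fun a x => (ball a δ).indicator f x) (μ.prod ν) :=
    (hf.comp_quasiMeasurePreserving Measure.quasiMeasurePreserving_snd).indicator hclose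
  calc ∫⁻ a, ∫⁻ x in ball a δ, f x ∂ν ∂μ
      = ∫⁻ a, ∫⁻ x, (ball a δ).indicator f x ∂ν ∂μ := by
        simp_rw [lintegral_indicator measurableSet_ball]
    _ = ∫⁻ x, ∫⁻ a, (ball x δ).indicator (fun _ => f x) a ∂μ ∂ν := by
        rw [lintegral_lintegral_swap hprod]
        refine lintegral_congr fun y => lintegral_congr fun a => ?_
        classical
        simp only [indicator_apply, mem_ball, dist_comm]
    _ = ∫⁻ x, μ (ball x δ) * f x ∂ν := by
        simp_rw [lintegral_indicator measurableSet_ball, setLIntegral_const, mul_comm]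

end Tonelli

theorem nuInt_nonneg (Ω : Set (Euc n)) (s : Euc n → ℝ) (p : ℝ) (u : Euc n → ℝ) (x : Euc n) :
    0 ≤ nuInt Ω s p u x :=
  mul_nonneg (Real.rpow_nonneg (integral_nonneg fun _ => abs_nonneg _) _)
    (Real.rpow_nonneg infDist_nonneg _)

theorem ofReal_nuM {Ω : Set (Euc n)} {s : Euc n → ℝ} {p : ℝ} {u : Euc n → ℝ}
    (hu : IntegrableOn (nuInt Ω s p u) Ω) (E : Set (Euc n)) :
    ENNReal.ofReal (nuM Ω s p u E) = ∫⁻ x in Ω ∩ E, ENNReal.ofReal (nuInt Ω s p u x) :=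
  ofReal_integral_eq_lintegral_ofReal (hu.mono_set inter_subset_left)
    (.of_forall (nuInt_nonneg Ω s p u))

theorem lintegral_ofReal_nuM_ball_le {Ω : Set (Euc n)} {s : Euc n → ℝ} {p : ℝ}
    {u : Euc n → ℝ} (hu : IntegrableOn (nuInt Ω s p u) Ω) {μ : Measure (Euc n)}
    {Γ Γ'' : Set (Euc n)} {A t : ℝ} (hΓ : IsUpperAhlforsRegular μ Γ A t)
    (hΓ''m : MeasurableSet Γ'') (hΓ''Γ : Γ'' ⊆ Γ) {δ : ℝ} (hδ : 0 < δ) :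
    ∫⁻ xb in Γ'', ENNReal.ofReal (nuM Ω s p u (ball xb δ)) ∂μ ≤
      ENNReal.ofReal (A * (2 * δ) ^ t) * ENNReal.ofReal (nuM Ω s p u (thickening (2 * δ) Γ'')) := by
  have : IsLocallyFiniteMeasure (μ.restrict Γ'') :=
    have := hΓ.isLocallyFiniteMeasure_restrict
    Measure.isLocallyFiniteMeasure_of_le (Measure.restrict_mono hΓ''Γ le_rfl)
  set ν := volume.restrict (Ω ∩ thickening (2 * δ) Γ'')
  have hF : AEMeasurable (fun x => ENNReal.ofReal (nuInt Ω s p u x)) ν :=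
    (hu.mono_set inter_subset_left).aemeasurable.ennreal_ofReal
  have hball {xb : Euc n} (hxb : xb ∈ Γ'') :
      ball xb δ ∩ (Ω ∩ thickening (2 * δ) Γ'') = Ω ∩ ball xb δ := by
    have : ball xb δ ⊆ thickening (2 * δ) Γ'' :=
      (ball_subset_thickening hxb δ).trans (thickening_mono (by linarith) _)
    rw [inter_left_comm, inter_eq_left.2 this]
  calc ∫⁻ xb in Γ'', ENNReal.ofReal (nuM Ω s p u (ball xb δ)) ∂μ
      = ∫⁻ xb in Γ'', ∫⁻ x in ball xb δ, ENNReal.ofReal (nuInt Ω s p u x) ∂ν ∂μ :=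
        setLIntegral_congr_fun hΓ''m fun xb hxb => by
          rw [Measure.restrict_restrict measurableSet_ball, hball hxb, ofReal_nuM hu]
    _ = ∫⁻ x, μ.restrict Γ'' (ball x δ) * ENNReal.ofReal (nuInt Ω s p u x) ∂ν :=
        lintegral_setLIntegral_ball_eq _ _ hF δ
    _ ≤ ∫⁻ x, ENNReal.ofReal (A * (2 * δ) ^ t) * ENNReal.ofReal (nuInt Ω s p u x) ∂ν := by
        refine lintegral_mono fun x => mul_le_mul_left ?_ _
        rw [Measure.restrict_apply measurableSet_ball, inter_comm]
        exact (measure_mono (inter_subset_inter_left _ hΓ''Γ)).trans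
          (hΓ.measure_inter_ball_le x hδ)
    _ = ENNReal.ofReal (A * (2 * δ) ^ t) *
          ENNReal.ofReal (nuM Ω s p u (thickening (2 * δ) Γ'')) := by
        rw [lintegral_const_mul' _ _ ENNReal.ofReal_ne_top, ofReal_nuM hu]

theorem statement13_general (n : ℕ) (t AΓ : ℝ) (hAΓ : 1 ≤ AΓ) :
    ∃ c : ℝ, 0 < c ∧
      ∀ (p : ℝ), 1 ≤ p →
      ∀ (Ω : Set (Euc n)), IsOpen Ω → Ω.Nonempty → (frontier Ω).Nonempty →
      ∀ (Γ : Set (Euc n)), Γ ⊆ frontier Ω →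
      ∀ (δΓ : ℝ), 0 < δΓ → δΓ < 1 →
      (∀ xb ∈ Γ, ∀ ρ : ℝ, 0 < ρ → μH[t] (Γ ∩ ball xb ρ) ≤ ENNReal.ofReal (AΓ * ρ ^ t)) →
      ∀ (s : Euc n → ℝ), Measurable s → (∀ x, 0 ≤ s x) → (∃ b : ℝ, ∀ x, s x ≤ b) →
      ∀ (u : Euc n → ℝ), MemN Ω s p u →
      ∀ (δ : ℝ), 0 < δ → δ ≤ δΓ →
      ∀ (Γ'' : Set (Euc n)), MeasurableSet Γ'' → Γ'' ⊆ Γ →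
        (∫⁻ xb in Γ'', ENNReal.ofReal (nuM Ω s p u (ball xb δ)) ∂μH[t]) ≤
          ENNReal.ofReal (c * δ ^ t * nuM Ω s p u (thickening (2 * δ) Γ'')) := by
  have hA : 0 < AΓ := by linarith
  refine ⟨AΓ * 2 ^ t, by positivity, ?_⟩
  intro p _ Ω _ _ _ Γ _ δΓ _ _ hΓ s _ _ _ u hu δ hδ _ Γ'' hΓ''m hΓ''Γ
  calc _ ≤ ENNReal.ofReal (AΓ * (2 * δ) ^ t) *
        ENNReal.ofReal (nuM Ω s p u (thickening (2 * δ) Γ'')) :=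
        lintegral_ofReal_nuM_ball_le hu.2 hΓ hΓ''m hΓ''Γ hδ
    _ = _ := by
        rw [← ENNReal.ofReal_mul (by positivity), Real.mul_rpow zero_le_two hδ.le]
        ring_nf

/-- integral bound on `G_δ` over upper Ahlfors-regular sets. Under (H4′),
`∫_{Γ″} G_δ dH^t ≤ c δ^t ν(B_{2δ}(Γ″);u)` with `c = c(n,t,A_Γ)` independent of `δ`. -/
theorem statement13 (n : ℕ) (hn : 1 ≤ n) (t AΓ : ℝ)
    (ht : 0 ≤ t) (htn : t < n) (hAΓ : 1 ≤ AΓ) :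
    ∃ c : ℝ, 0 < c ∧
      ∀ (p : ℝ), 1 ≤ p →
      ∀ (Ω : Set (Euc n)), IsOpen Ω → Ω.Nonempty → (frontier Ω).Nonempty →
      ∀ (Γ : Set (Euc n)), Γ ⊆ frontier Ω →
      ∀ (δΓ : ℝ), 0 < δΓ → δΓ < 1 →
      (∀ xb ∈ Γ, ∀ ρ : ℝ, 0 < ρ → μH[t] (Γ ∩ ball xb ρ) ≤ ENNReal.ofReal (AΓ * ρ ^ t)) →
      ∀ (s : Euc n → ℝ), Measurable s → (∀ x, 0 ≤ s x) → (∃ b : ℝ, ∀ x, s x ≤ b) →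
      ∀ (u : Euc n → ℝ), MemN Ω s p u →
      ∀ (δ : ℝ), 0 < δ → δ ≤ δΓ →
      ∀ (Γ'' : Set (Euc n)), MeasurableSet Γ'' → Γ'' ⊆ Γ →
        (∫⁻ xb in Γ'', ENNReal.ofReal (nuM Ω s p u (ball xb δ)) ∂μH[t]) ≤
          ENNReal.ofReal (c * δ ^ t * nuM Ω s p u (thickening (2 * δ) Γ'')) :=
  statement13_general n t AΓ hAΓ
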